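/- arXiv:2202.07381 — 2 statements merged into one kernel-verified Lean document; each statement's English description precedes it below -/
import Mathlib

section
/- If M is symmetric positive definite, K is symmetric positive semidefinite, and all eigenvalues of the matrix A ∈ ℝ^{r×r} have positive real part, then for every Δt > 0 the matrix I_r ⊗ M + Δt A ⊗ K is invertible. -/
/-!
Write `M = Q Qᴴ` and `K = Q D Qᴴ` with `Q` invertible and `D = diag(d)`, `d ≥ 0` (congruence by
a square root of `M`, then the spectral theorem). Then
`I ⊗ M + Δt A ⊗ K = (I ⊗ Q) (I + Δt A ⊗ D) (I ⊗ Qᴴ)`, and the middle factor is block diagonal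
with blocks `I + Δt d_k A`. Such a block is singular only if `-1 / (Δt d_k) < 0` is an eigenvalue
of `A`, which the hypothesis on the spectrum of `A` excludes.
-/

open Matrix Kronecker
open scoped ComplexOrder

theorem spectrum.isUnit_one_add_smul {K A : Type*} [Field K] [Ring A] [Algebra K A]
    {a : A} {c : K} (hc : c ≠ 0) (h : -c⁻¹ ∉ spectrum K a) : IsUnit (1 + c • a) := by
  have hunit : IsUnit (algebraMap K A (-c⁻¹) - a) := spectrum.notMem_iff.mp h
  have hfactor : 1 + c • a = (-c) • (algebraMap K A (-c⁻¹) - a) := by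
    rw [Algebra.algebraMap_eq_smul_one, smul_sub, smul_smul]
    field_simp
    simp [sub_eq_add_neg]
  rw [hfactor]
  exact (isUnit_smul_iff (Units.mk0 (-c) (neg_ne_zero.mpr hc)) _).mpr hunit

theorem Matrix.isUnit_det_one_add_smul_of_re_pos {ι : Type*} [Fintype ι] [DecidableEq ι]
    {A : Matrix ι ι ℝ} (hA : ∀ μ ∈ spectrum ℂ (A.map Complex.ofReal), 0 < μ.re)
    {c : ℝ} (hc : 0 ≤ c) : IsUnit (1 + c • A).det := by
  obtain rfl | hc := hc.eq_or_lt
  · simp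
  have hnotMem : -(c : ℂ)⁻¹ ∉ spectrum ℂ (A.map Complex.ofReal) := fun hmem => by
    rw [← Complex.ofReal_inv, ← Complex.ofReal_neg] at hmem
    have hre := hA _ hmem
    rw [Complex.ofReal_re] at hre
    linarith [inv_pos.mpr hc]
  have hmap : (1 + c • A).map Complex.ofRealHom = 1 + (c : ℂ) • A.map Complex.ofReal := by
    ext i j
    simp [Matrix.one_apply, apply_ite]
  have hunit := (isUnit_iff_isUnit_det _).mp
    (spectrum.isUnit_one_add_smul (Complex.ofReal_ne_zero.mpr hc.ne') hnotMem)
  rw [← hmap, ← RingHom.mapMatrix_apply, ← RingHom.map_det, isUnit_iff_ne_zero,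
    map_ne_zero] at hunit
  exact isUnit_iff_ne_zero.mpr hunit

theorem Matrix.PosSemidef.exists_unitary_diagonal {𝕜 n : Type*} [RCLike 𝕜]
    [Fintype n] [DecidableEq n] {S : Matrix n n 𝕜} (hS : S.PosSemidef) :
    ∃ U ∈ unitaryGroup n 𝕜, ∃ d : n → ℝ, (∀ i, 0 ≤ d i) ∧
      S = U * diagonal (fun i => (d i : 𝕜)) * Uᴴ :=
  ⟨_, hS.1.eigenvectorUnitary.2, _, hS.eigenvalues_nonneg, hS.1.spectral_theorem⟩

theorem Matrix.PosDef.exists_eq_mul_conjTranspose_and_diagonal {𝕜 n : Type*} [RCLike 𝕜]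
    [Fintype n] [DecidableEq n] {M K : Matrix n n 𝕜} (hM : M.PosDef) (hK : K.PosSemidef) :
    ∃ (Q : Matrix n n 𝕜) (d : n → ℝ), IsUnit Q ∧ (∀ i, 0 ≤ d i) ∧
      M = Q * Qᴴ ∧ K = Q * diagonal (fun i => (d i : 𝕜)) * Qᴴ := by
  obtain ⟨B, hB, rfl⟩ : ∃ B, IsUnit B ∧ M = B * Bᴴ := by
    open scoped MatrixOrder in
    exact CStarAlgebra.isStrictlyPositive_iff_eq_mul_star_self.mp
      (Matrix.isStrictlyPositive_iff_posDef.mpr hM)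
  obtain ⟨U, hU, d, hd, hSpec⟩ := (hK.mul_mul_conjTranspose_same B⁻¹).exists_unitary_diagonal
  have hUU : U * Uᴴ = 1 := mem_unitaryGroup_iff.mp hU
  have hBB : B * B⁻¹ = 1 := mul_nonsing_inv _ ((isUnit_iff_isUnit_det B).mp hB)
  refine ⟨B * U, d, hB.mul (Unitary.isUnit_coe (U := ⟨U, hU⟩)), hd, ?_, ?_⟩
  · rw [conjTranspose_mul, mul_assoc, ← mul_assoc U, hUU, one_mul]
  · calc K = B * B⁻¹ * K * (B * B⁻¹)ᴴ := by rw [hBB, conjTranspose_one, one_mul, mul_one]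
      _ = B * (B⁻¹ * K * B⁻¹ᴴ) * Bᴴ := by simp only [conjTranspose_mul, mul_assoc]
      _ = _ := by rw [hSpec]; simp only [conjTranspose_mul, mul_assoc]

theorem Matrix.one_kronecker_add_kronecker_eq_mul {R m n : Type*} [CommSemiring R] [Fintype m]
    [Fintype n] [DecidableEq m] [DecidableEq n] (A : Matrix m m R) (Q D P : Matrix n n R) :
    1 ⊗ₖ (Q * P) + A ⊗ₖ (Q * D * P) = (1 ⊗ₖ Q) * (1 + A ⊗ₖ D) * (1 ⊗ₖ P) := by
  rw [Matrix.mul_add, Matrix.add_mul, Matrix.mul_one, ← mul_kronecker_mul, ← mul_kronecker_mul,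
    ← mul_kronecker_mul, Matrix.one_mul, Matrix.one_mul, Matrix.mul_one]

theorem Matrix.det_one_add_kronecker_diagonal {R m n : Type*} [CommRing R] [Fintype m]
    [Fintype n] [DecidableEq m] [DecidableEq n] (A : Matrix m m R) (d : n → R) :
    det (1 + A ⊗ₖ diagonal d) = ∏ k, det (1 + d k • A) := by
  rw [kronecker_diagonal, ← blockDiagonal_one, ← blockDiagonal_add, det_blockDiagonal]
  simp only [Pi.add_apply, Pi.one_apply, op_smul_eq_smul]

/-- if `M` is SPD, `K` symmetric PSD, and every (complex) eigenvalue of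
`A` has positive real part, then `I_r ⊗ M + Δt A ⊗ K` is invertible for every `Δt > 0`. -/
theorem irk_velocity_block_invertible
    (n r : ℕ) (M K : Matrix (Fin n) (Fin n) ℝ)
    (hM : M.PosDef) (hK : K.PosSemidef)
    (A : Matrix (Fin r) (Fin r) ℝ)
    (hA : ∀ μ ∈ spectrum ℂ (A.map (Complex.ofReal)), 0 < μ.re) :
    ∀ Δt : ℝ, 0 < Δt →
      IsUnit ((1 : Matrix (Fin r) (Fin r) ℝ) ⊗ₖ M + (Δt • A) ⊗ₖ K).det := by
  intro Δt hΔt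
  obtain ⟨Q, d, hQ, hd, rfl, rfl⟩ := hM.exists_eq_mul_conjTranspose_and_diagonal hK
  have hQdet : IsUnit Q.det := (isUnit_iff_isUnit_det Q).mp hQ
  rw [one_kronecker_add_kronecker_eq_mul, det_mul, det_mul, det_kronecker, det_kronecker,
    det_one_add_kronecker_diagonal, det_conjTranspose]
  refine ((?_ : IsUnit _).mul (IsUnit.prod_univ_iff.mpr fun k => ?_)).mul ?_
  · simpa using hQdet.pow _
  · rw [smul_smul]
    exact isUnit_det_one_add_smul_of_re_pos hA (mul_nonneg (hd k) hΔt.le)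
  · simpa using hQdet.star.pow _
end

section
/- Let J ∈ ℝ^{N×N} be symmetric positive definite and let R_1,...,R_m be restriction matrices (each R_i consisting of distinct rows of the identity) such that every index 1..N appears in at least one R_i. Then the additive Schwarz preconditioner P = Σ_i R_i^T (R_i J R_i^T)^{-1} R_i is symmetric positive definite. -/
/-! Each term `Rᵢᵀ (Rᵢ J Rᵢᵀ)⁻¹ Rᵢ` is positive semidefinite, with quadratic form
`x ↦ (Rᵢ x)ᵀ (Rᵢ J Rᵢᵀ)⁻¹ (Rᵢ x)`, which is positive as soon as `Rᵢ x ≠ 0` because the principal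
submatrix `Rᵢ J Rᵢᵀ` of `J`, and hence its inverse, is positive definite. Since the index sets
cover `{1, …, N}`, every `x ≠ 0` has `Rᵢ x ≠ 0` for some `i`. -/

open Matrix

/-- The row-selection ("restriction") matrix whose rows are the rows `ι a` of the
identity matrix. -/
def selMatrix {k N : ℕ} (ι : Fin k → Fin N) : Matrix (Fin k) (Fin N) ℝ :=
  Matrix.of fun a b => if ι a = b then 1 else 0

namespace Matrix

variable {R ι n : Type*} [Ring R] [PartialOrder R] [StarRing R] [IsOrderedCancelAddMonoid R]
  [Fintype ι] [Fintype n] {m : ι → Type*} [∀ i, Fintype (m i)]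

theorem posDef_sum_conjTranspose_mul_mul {A : ∀ i, Matrix (m i) (m i) R} (hA : ∀ i, (A i).PosDef)
    (B : ∀ i, Matrix (m i) n R) (hB : ∀ x, (∀ i, B i *ᵥ x = 0) → x = 0) :
    (∑ i, (B i)ᴴ * A i * B i).PosDef := by
  have hquad (i : ι) (x : n → R) :
      star x ⬝ᵥ ((B i)ᴴ * A i * B i) *ᵥ x = star (B i *ᵥ x) ⬝ᵥ A i *ᵥ (B i *ᵥ x) := by
    simp only [star_mulVec, dotProduct_mulVec, vecMul_vecMul]
  have hterm (i : ι) : ((B i)ᴴ * A i * B i).PosSemidef :=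
    (hA i).posSemidef.conjTranspose_mul_mul_same (B i)
  refine PosDef.of_dotProduct_mulVec_pos (posSemidef_sum _ fun i _ => hterm i).isHermitian
    fun x hx => ?_
  obtain ⟨i, hi⟩ : ∃ i, B i *ᵥ x ≠ 0 := by
    by_contra! h
    exact hx (hB x h)
  rw [sum_mulVec, dotProduct_sum]
  refine Finset.sum_pos' (fun j _ => (hterm j).dotProduct_mulVec_nonneg x)
    ⟨i, Finset.mem_univ i, ?_⟩
  exact hquad i x ▸ (hA i).dotProduct_mulVec_pos hi

end Matrix

theorem selMatrix_mulVec {k N : ℕ} (ι : Fin k → Fin N) (x : Fin N → ℝ) :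
    selMatrix ι *ᵥ x = x ∘ ι := by
  ext a
  simp [selMatrix, mulVec, dotProduct, ite_mul]

theorem selMatrix_mul_mul_transpose {k N : ℕ} (ι : Fin k → Fin N) (J : Matrix (Fin N) (Fin N) ℝ) :
    selMatrix ι * J * (selMatrix ι)ᵀ = J.submatrix ι ι := by
  ext a b
  simp [selMatrix, mul_apply, ite_mul]

/-- for `J` SPD and restriction matrices `R_i` (distinct rows of the
identity) whose index sets cover `{1,…,N}`, the additive Schwarz preconditioner
`P = ∑ᵢ Rᵢᵀ (Rᵢ J Rᵢᵀ)⁻¹ Rᵢ` is symmetric positive definite. -/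
theorem additiveSchwarz_posDef
    (N m : ℕ) (J : Matrix (Fin N) (Fin N) ℝ) (hJ : J.PosDef)
    (n : Fin m → ℕ) (ι : ∀ i, Fin (n i) → Fin N)
    (hinj : ∀ i, Function.Injective (ι i))
    (hcover : ∀ j : Fin N, ∃ i a, ι i a = j) :
    (∑ i, (selMatrix (ι i))ᵀ * (selMatrix (ι i) * J * (selMatrix (ι i))ᵀ)⁻¹ *
        selMatrix (ι i)).PosDef := by
  have hlocal (i : Fin m) : (selMatrix (ι i) * J * (selMatrix (ι i))ᵀ)⁻¹.PosDef := by
    rw [selMatrix_mul_mul_transpose]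
    exact (hJ.submatrix (hinj i)).inv
  have hker (x : Fin N → ℝ) (hx : ∀ i, selMatrix (ι i) *ᵥ x = 0) : x = 0 := by
    ext j
    obtain ⟨i, a, rfl⟩ := hcover j
    simpa [selMatrix_mulVec] using congrFun (hx i) a
  simpa only [conjTranspose_eq_transpose_of_trivial] using
    posDef_sum_conjTranspose_mul_mul hlocal (fun i => selMatrix (ι i)) hker
end
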